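/- Let A be a locally C*-algebra, V a Hilbert A-module, and Φ : V → B(H,K) a representation of V with associated representation φ : A → B(H) (so Φ(x)*Φ(y) = φ(⟨x,y⟩)). Let p ∈ S(A) be a continuous C*-seminorm with ‖φ(a)‖ ≤ p(a) for all a ∈ A, and let φ_p : A_p → B(H) be the representation of A_p with φ_p ∘ π_p = φ. Then the map Φ_p : V_p → B(H,K) given by Φ_p(σ_p^V(v)) = Φ(v) is well-defined and is a φ_p-morphism, i.e., Φ_p(u)*Φ_p(w) = φ_p(⟨u,w⟩) for all u, w ∈ V_p. Moreover, Φ is non-degenerate if and only if Φ_p is non-degenerate. -/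

import Mathlib

noncomputable section
open scoped ComplexOrder RightActions
open ContinuousLinearMap (adjoint)

/-- A (continuous) C*-seminorm on a complex *-algebra: a seminorm which is
submultiplicative and satisfies the C*-identity. -/
structure CStarSeminormOn (A : Type*) [NonUnitalRing A] [StarRing A] [Module ℂ A] extends
    Seminorm ℂ A where
  mul_le' : ∀ a b : A, toSeminorm (a * b) ≤ toSeminorm a * toSeminorm b
  star_mul_self' : ∀ a : A, toSeminorm (star a * a) = toSeminorm a ^ 2

/-- The data of a (right) Hilbert module over a locally C*-algebra `A`: a right
`A`-module with an `A`-valued inner product which is `A`-linear in the second variable,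
hermitian, positive and definite. -/
structure HilbertModuleData (A : Type*) [NonUnitalRing A] [StarRing A] [Module ℂ A]
    [TopologicalSpace A] (E : Type*) [AddCommGroup E] [Module ℂ E] where
  smul : E → A → E
  inner : E → E → A
  add_smul' : ∀ x y a, smul (x + y) a = smul x a + smul y a
  smul_add' : ∀ x a b, smul x (a + b) = smul x a + smul x b
  smul_mul' : ∀ x a b, smul (smul x a) b = smul x (a * b)
  smul_complex : ∀ (c : ℂ) x a, smul (c • x) a = c • smul x a
  inner_add_right : ∀ x y z, inner x (y + z) = inner x y + inner x z
  inner_smul_right : ∀ x y a, inner x (smul y a) = inner x y * a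
  inner_smul_complex : ∀ (c : ℂ) x y, inner x (c • y) = c • inner x y
  star_inner : ∀ x y, star (inner x y) = inner y x
  inner_self_nonneg : ∀ x, inner x x ∈ closure {a : A | ∃ b, a = star b * b}
  inner_self_eq_zero : ∀ x, inner x x = 0 → x = 0

/-- A C*-algebra bundled with a compatible partial order. -/
structure BundledCStarAlg : Type 1 where
  carrier : Type
  [inst : NonUnitalCStarAlgebra carrier]
  [instOrder : PartialOrder carrier]
  [instSOR : StarOrderedRing carrier]

attribute [instance] BundledCStarAlg.inst BundledCStarAlg.instOrder BundledCStarAlg.instSOR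

/-- The December 2024 Mathlib `CStarModule` (right module: `SMul Aᵐᵒᵖ E`), which Mathlib
has since replaced by a left-module version. -/
class RightCStarModule (A E : Type*) [NonUnitalSemiring A] [StarRing A] [Module ℂ A]
    [AddCommGroup E] [Module ℂ E] [PartialOrder A] [SMul Aᵐᵒᵖ E] [Norm A] [Norm E]
    extends Inner A E where
  inner_add_right {x} {y} {z} : inner x (y + z) = inner x y + inner x z
  inner_self_nonneg {x} : 0 ≤ inner x x
  inner_self {x} : inner x x = 0 ↔ x = 0
  inner_op_smul_right {a : A} {x y : E} : inner x (y <• a) = inner x y * a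
  inner_smul_right_complex {z : ℂ} {x} {y} : inner x (z • y) = z • inner x y
  star_inner x y : star (inner x y) = inner y x
  norm_eq_sqrt_norm_inner_self x : ‖x‖ = √‖inner x x‖

/-- A bundled Hilbert C*-module over a bundled C*-algebra. -/
structure BundledCStarModule (C : BundledCStarAlg) : Type 1 where
  carrier : Type
  [instGroup : NormedAddCommGroup carrier]
  [instModC : NormedSpace ℂ carrier]
  [instSMul : SMul C.carrierᵐᵒᵖ carrier]
  [instMod : RightCStarModule C.carrier carrier]
  [instComplete : CompleteSpace carrier]

attribute [instance] BundledCStarModule.instGroup BundledCStarModule.instModC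
  BundledCStarModule.instSMul BundledCStarModule.instMod BundledCStarModule.instComplete

/-- `π : A → C` realizes the C*-algebra `C` as the quotient `A_p = A/N_p` of `A` by the
kernel of the C*-seminorm `p`, with the norm induced by `p`. -/
structure IsQuotientHom {A : Type*} [NonUnitalRing A] [StarRing A] [Module ℂ A]
    (p : A → ℝ) (C : BundledCStarAlg) (π : A → C.carrier) : Prop where
  surj : Function.Surjective π
  map_add : ∀ a b, π (a + b) = π a + π b
  map_mul : ∀ a b, π (a * b) = π a * π b
  map_smul : ∀ (c : ℂ) (a : A), π (c • a) = c • π a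
  map_star : ∀ a, π (star a) = star (π a)
  norm_eq : ∀ a, ‖π a‖ = p a

/-- `σ : E → F` realizes the Hilbert C*-module `F` over `C` as the quotient
`E_p = E/N_p^E` of the Hilbert module `E`, compatibly with the quotient map `π : A → C`. -/
structure IsQuotientModuleMap {A : Type*} [NonUnitalRing A] [StarRing A] [Module ℂ A]
    [TopologicalSpace A] {E : Type*} [AddCommGroup E] [Module ℂ E]
    (M : HilbertModuleData A E) {C : BundledCStarAlg} (π : A → C.carrier)
    (F : BundledCStarModule C) (σ : E → F.carrier) : Prop where
  surj : Function.Surjective σ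
  map_add : ∀ x y, σ (x + y) = σ x + σ y
  map_smulC : ∀ (c : ℂ) x, σ (c • x) = c • σ x
  map_smul : ∀ x a, σ (M.smul x a) = σ x <• (π a)
  map_inner : ∀ x y, (inner C.carrier (σ x) (σ y) : C.carrier) = π (M.inner x y)

/-- A representation `Φ : V → B(H,K)` of a Hilbert module `V` over a locally C*-algebra,
with associated representation `φ` dominated by the continuous C*-seminorm `p`,
descends to a well-defined `φ_p`-morphism `Φ_p : V_p → B(H,K)` on the quotient Hilbert
C*-module `V_p`, and `Φ` is non-degenerate iff `Φ_p` is. -/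
theorem stmt_6
    {A : Type*} [NonUnitalRing A] [StarRing A] [Module ℂ A]
    [UniformSpace A] [IsUniformAddGroup A] [T2Space A] [CompleteSpace A]
    {ι : Type*} [Nonempty ι] (S : ι → CStarSeminormOn A)
    (hA : WithSeminorms fun i => (S i).toSeminorm)
    (hScont : ∀ i, Continuous fun a => (S i).toSeminorm a)
    {V : Type*} [AddCommGroup V] [Module ℂ V] (M : HilbertModuleData A V)
    {H K : Type*}
    [NormedAddCommGroup H] [InnerProductSpace ℂ H] [CompleteSpace H]
    [NormedAddCommGroup K] [InnerProductSpace ℂ K] [CompleteSpace K]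
    -- the representation `φ` of `A` and the representation `Φ` of `V`:
    (φ : A → (H →L[ℂ] H))
    (hφ_add : ∀ a b, φ (a + b) = φ a + φ b) (hφ_mul : ∀ a b, φ (a * b) = φ a ∘L φ b)
    (hφ_smul : ∀ (c : ℂ) a, φ (c • a) = c • φ a) (hφ_star : ∀ a, φ (star a) = adjoint (φ a))
    (Φ : V → (H →L[ℂ] K))
    (hΦ : ∀ x y : V, adjoint (Φ x) ∘L Φ y = φ (M.inner x y))
    -- `p ∈ S(A)` dominates `φ`:
    (p : CStarSeminormOn A) (hp : Continuous fun a => p.toSeminorm a)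
    (hnorm : ∀ a : A, ‖φ a‖ ≤ p.toSeminorm a)
    -- the quotient C*-algebra `A_p`, the quotient module `V_p`, and the associated
    -- representation `φ_p` of `A_p`:
    (C : BundledCStarAlg) (π : A → C.carrier)
    (hπ : IsQuotientHom (fun a => p.toSeminorm a) C π)
    (Vp : BundledCStarModule C) (σ : V → Vp.carrier) (hσ : IsQuotientModuleMap M π Vp σ)
    (φp : C.carrier → (H →L[ℂ] H)) (hφp : ∀ a : A, φp (π a) = φ a) :
    ∃ Φp : Vp.carrier → (H →L[ℂ] K),
      -- `Φ_p(σ_p(v)) = Φ(v)` is well-defined: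
      (∀ v : V, Φp (σ v) = Φ v) ∧
      -- `Φ_p` is a `φ_p`-morphism:
      (∀ u w : Vp.carrier, adjoint (Φp u) ∘L Φp w = φp (inner C.carrier u w)) ∧
      -- `Φ` is non-degenerate iff `Φ_p` is non-degenerate:
      ((Dense ((Submodule.span ℂ
          (Set.range fun q : V × H => Φ q.1 q.2) : Submodule ℂ K) : Set K) ∧
        Dense ((Submodule.span ℂ
          (Set.range fun q : V × K => adjoint (Φ q.1) q.2) : Submodule ℂ H) : Set H)) ↔
       (Dense ((Submodule.span ℂ
          (Set.range fun q : Vp.carrier × H => Φp q.1 q.2) : Submodule ℂ K) : Set K) ∧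
        Dense ((Submodule.span ℂ
          (Set.range fun q : Vp.carrier × K => adjoint (Φp q.1) q.2) : Submodule ℂ H) :
            Set H))) := by
  classical
  -- φ preserves negation and subtraction
  have hφ_neg : ∀ a, φ (-a) = -φ a := by
    intro a
    have : (-a) = (-1 : ℂ) • a := by simp
    rw [this, hφ_smul]; simp
  have hφ_sub : ∀ a b, φ (a - b) = φ a - φ b := by
    intro a b
    rw [sub_eq_add_neg, hφ_add, hφ_neg, sub_eq_add_neg]
  -- inner product manipulations
  have hinner_neg_right : ∀ x y, M.inner x (-y) = -M.inner x y := by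
    intro x y
    have : (-y) = (-1 : ℂ) • y := by simp
    rw [this, M.inner_smul_complex]; simp
  have hinner_sub_right : ∀ x y z, M.inner x (y - z) = M.inner x y - M.inner x z := by
    intro x y z
    rw [sub_eq_add_neg, M.inner_add_right, hinner_neg_right, sub_eq_add_neg]
  have hinner_sub_left : ∀ x y z, M.inner (x - y) z = M.inner x z - M.inner y z := by
    intro x y z
    rw [← M.star_inner, hinner_sub_right, star_sub, M.star_inner, M.star_inner]
  -- the key expansion
  have hexp : ∀ v w : V,
      adjoint (Φ v - Φ w) ∘L (Φ v - Φ w) = φ (M.inner (v - w) (v - w)) := by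
    intro v w
    rw [map_sub, ContinuousLinearMap.sub_comp, ContinuousLinearMap.comp_sub,
      ContinuousLinearMap.comp_sub, hΦ, hΦ, hΦ, hΦ,
      hinner_sub_left, hinner_sub_right, hinner_sub_right, hφ_sub, hφ_sub, hφ_sub]
  -- well-definedness kernel lemma
  have hker : ∀ v w : V, σ v = σ w → Φ v = Φ w := by
    intro v w h
    have hσ0 : σ (v - w) = 0 := by
      have h1 := hσ.map_add (v - w) w
      rw [sub_add_cancel, h] at h1
      have := h1.symm
      abel_nf at this ⊢
      linear_combination (norm := module) this
    have hπ0 : π (M.inner (v - w) (v - w)) = 0 := by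
      rw [← hσ.map_inner, hσ0]
      exact RightCStarModule.inner_self.mpr rfl
    have hp0 : p.toSeminorm (M.inner (v - w) (v - w)) = 0 := by
      rw [← hπ.norm_eq, hπ0, norm_zero]
    have hφ0 : φ (M.inner (v - w) (v - w)) = 0 := by
      have h1 := hnorm (M.inner (v - w) (v - w))
      rw [hp0] at h1
      exact norm_le_zero_iff.mp h1
    have hT : adjoint (Φ v - Φ w) ∘L (Φ v - Φ w) = 0 := by
      rw [hexp, hφ0]
    have hnormT : ‖Φ v - Φ w‖ * ‖Φ v - Φ w‖ = 0 := by
      rw [← ContinuousLinearMap.norm_adjoint_comp_self, hT, norm_zero]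
    have : Φ v - Φ w = 0 := by
      rw [← norm_le_zero_iff]
      nlinarith [norm_nonneg (Φ v - Φ w)]
    exact sub_eq_zero.mp this
  -- the quotient representation
  set Φp : Vp.carrier → (H →L[ℂ] K) := fun u => Φ (hσ.surj u).choose with hΦpdef
  have hΦpσ : ∀ v : V, Φp (σ v) = Φ v := by
    intro v
    exact hker _ _ (hσ.surj (σ v)).choose_spec
  refine ⟨Φp, hΦpσ, ?_, ?_⟩
  · intro u w
    obtain ⟨v, rfl⟩ := hσ.surj u
    obtain ⟨x, rfl⟩ := hσ.surj w
    rw [hΦpσ, hΦpσ, hΦ, hσ.map_inner, hφp]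
  · have hr1 : (Set.range fun q : V × H => Φ q.1 q.2) =
        Set.range fun q : Vp.carrier × H => Φp q.1 q.2 := by
      ext k
      constructor
      · rintro ⟨⟨v, h⟩, rfl⟩
        exact ⟨(σ v, h), by simp [hΦpσ]⟩
      · rintro ⟨⟨u, h⟩, rfl⟩
        obtain ⟨v, rfl⟩ := hσ.surj u
        exact ⟨(v, h), by simp [hΦpσ]⟩
    have hr2 : (Set.range fun q : V × K => adjoint (Φ q.1) q.2) =
        Set.range fun q : Vp.carrier × K => adjoint (Φp q.1) q.2 := by
      ext k
      constructor
      · rintro ⟨⟨v, h⟩, rfl⟩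
        exact ⟨(σ v, h), by simp [hΦpσ]⟩
      · rintro ⟨⟨u, h⟩, rfl⟩
        obtain ⟨v, rfl⟩ := hσ.surj u
        exact ⟨(v, h), by simp [hΦpσ]⟩
    rw [hr1, hr2]
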